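/- Let n ≥ 1 and let G be the fat fan of order n with base xyz, with apex y' and path vertices v_1, …, v_n. Let L be a list assignment with |L(y')| = 5 and 3 ≤ |L(v_i)| ≤ 5 for 1 ≤ i ≤ n. If a precoloring φ of the base xyz does not extend to an L-coloring of G, then {φ(x)} = L(v_1) \ L(v_n), {φ(z)} = L(v_n) \ L(v_1), and {φ(y)} = L(y') \ (L(v_1) ∪ L(v_n)). In particular, there exists at most one precoloring of xyz that does not extend to an L-coloring of G. -/

import Mathlib

/-!
Color the apex with one of the at least two colors `c ∈ L(y') \ {φ x, φ y, φ z}`. After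
deleting `c`, every path list still has two colors, so the path `v₁ … vₙ` can be colored
greedily starting from `x` unless `|L(vₙ) \ {φ z, c}| ≤ 1`, and, symmetrically, starting
from `z` unless `|L(v₁) \ {φ x, c}| ≤ 1`. If `φ` does not extend, this holds for two such
colors `s, t`, which forces `L(v₁) = {φ x, s, t}` and `L(vₙ) = {φ z, s, t}`; then `L(y')`
has no further free color, and `|L(y')| = 5` forces `L(y') = {φ x, φ y, φ z, s, t}` with
`φ x ≠ φ z`.
-/

/-- Vertices of the fat fan of order `n`: the base `x, y, z`, the apex `y'`,
and the path vertices `v 0, …, v (n-1)` (written `v_1, …, v_n` in the paper). -/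
inductive FFVert (n : ℕ) : Type where
  | x | y | z | apex
  | v (i : Fin n)
deriving DecidableEq

/-- The fat fan of order `n` with base `x y z` and apex `y'`. -/
def fatFan (n : ℕ) : SimpleGraph (FFVert n) :=
  SimpleGraph.fromEdgeSet (
    {s(FFVert.x, FFVert.y), s(FFVert.y, FFVert.z),
     s(FFVert.x, FFVert.apex), s(FFVert.y, FFVert.apex), s(FFVert.z, FFVert.apex)} ∪
    {e | ∃ i : Fin n, e = s(FFVert.apex, FFVert.v i)} ∪
    {e | ∃ i : Fin n, (i : ℕ) = 0 ∧ e = s(FFVert.x, FFVert.v i)} ∪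
    {e | ∃ i j : Fin n, (i : ℕ) + 1 = (j : ℕ) ∧ e = s(FFVert.v i, FFVert.v j)} ∪
    {e | ∃ i : Fin n, (i : ℕ) = n - 1 ∧ e = s(FFVert.v i, FFVert.z)})

/-- The precoloring of the base `x y z` by the colors `cx, cy, cz` extends to
an `L`-coloring of the fat fan of order `n`. -/
def ExtendsFF {n : ℕ} {α : Type*} (L : FFVert n → Finset α) (cx cy cz : α) : Prop :=
  ∃ ψ : FFVert n → α,
    (∀ u w : FFVert n, (fatFan n).Adj u w → ψ u ≠ ψ w) ∧
    ψ FFVert.x = cx ∧ ψ FFVert.y = cy ∧ ψ FFVert.z = cz ∧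
    (∀ w : FFVert n, w ≠ FFVert.x → w ≠ FFVert.y → w ≠ FFVert.z → ψ w ∈ L w)


open Finset

theorem exists_path_listColoring {α : Type*} {m : ℕ} (a : α) (ℓ : Fin m → Finset α)
    (hℓ : ∀ i, 1 < #(ℓ i)) :
    ∃ g : ℕ → α, g 0 = a ∧ ∀ i : Fin m, g (i + 1) ∈ ℓ i ∧ g i ≠ g (i + 1) := by
  induction m with
  | zero => exact ⟨fun _ => a, rfl, fun i => i.elim0⟩
  | succ m ih =>
    obtain ⟨g, hg0, hg⟩ := ih (ℓ ∘ Fin.castSucc) fun i => hℓ _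
    obtain ⟨b, hb, hbg⟩ := exists_mem_ne (hℓ (Fin.last m)) (g m)
    refine ⟨Function.update g (m + 1) b, by simpa using hg0, fun i => ?_⟩
    rcases i.eq_castSucc_or_eq_last with ⟨i, rfl⟩ | rfl
    · have hi := i.isLt
      simpa [Function.update_of_ne (by omega : (i : ℕ) ≠ m + 1),
        Function.update_of_ne (by omega : (i : ℕ) + 1 ≠ m + 1)] using hg i
    · simpa [Function.update_of_ne (by omega : m ≠ m + 1)] using ⟨hb, hbg.symm⟩

namespace FFVert

variable {n : ℕ}

def rev : FFVert n → FFVert n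
  | x => z
  | y => y
  | z => x
  | apex => apex
  | v i => v i.rev

@[simp]
theorem rev_rev (u : FFVert n) : u.rev.rev = u := by
  cases u <;> simp [rev]

theorem rev_injective : Function.Injective (rev : FFVert n → FFVert n) :=
  Function.LeftInverse.injective rev_rev

@[simp]
def elim {β : Type*} (bx by' bz bapex : β) (f : Fin n → β) : FFVert n → β
  | x => bx
  | y => by'
  | z => bz
  | apex => bapex
  | v i => f i

end FFVert

open FFVert

theorem fatFan_adj_rev {n : ℕ} {u w : FFVert n} (h : (fatFan n).Adj u w) :
    (fatFan n).Adj u.rev w.rev := by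
  rw [fatFan, SimpleGraph.fromEdgeSet_adj] at h ⊢
  refine ⟨?_, rev_injective.ne h.2⟩
  obtain ⟨hm, -⟩ := h
  simp only [Set.mem_union, Set.mem_insert_iff, Set.mem_ofPred_eq,
    Set.mem_singleton_iff] at hm ⊢
  rcases hm with ((((h | h | h | h | h) | ⟨i, h⟩) | ⟨i, hi, h⟩) | ⟨i, j, hij, h⟩) | ⟨i, hi, h⟩ <;>
    rcases Sym2.eq_iff.1 h with ⟨rfl, rfl⟩ | ⟨rfl, rfl⟩ <;>
    simp [rev, Sym2.eq_swap] <;> grind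

theorem ne_of_fatFan_adj {n : ℕ} {α : Type*} (ψ : FFVert n → α)
    (hxy : ψ x ≠ ψ y) (hyz : ψ y ≠ ψ z) (hxa : ψ x ≠ ψ apex) (hya : ψ y ≠ ψ apex)
    (hza : ψ z ≠ ψ apex) (hav : ∀ i, ψ apex ≠ ψ (v i))
    (hfirst : ∀ i : Fin n, (i : ℕ) = 0 → ψ x ≠ ψ (v i))
    (hpath : ∀ i j : Fin n, (i : ℕ) + 1 = j → ψ (v i) ≠ ψ (v j))
    (hlast : ∀ i : Fin n, (i : ℕ) = n - 1 → ψ (v i) ≠ ψ z)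
    {u w : FFVert n} (h : (fatFan n).Adj u w) : ψ u ≠ ψ w := by
  rw [fatFan, SimpleGraph.fromEdgeSet_adj] at h
  simp only [Set.mem_union, Set.mem_insert_iff, Set.mem_ofPred_eq,
    Set.mem_singleton_iff] at h
  rcases h.1 with ((((h | h | h | h | h) | ⟨i, h⟩) | ⟨i, hi, h⟩) | ⟨i, j, hij, h⟩) | ⟨i, hi, h⟩ <;>
    rcases Sym2.eq_iff.1 h with ⟨rfl, rfl⟩ | ⟨rfl, rfl⟩
  all_goals first
    | assumption | exact Ne.symm ‹_›
    | exact hav i | exact (hav i).symm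
    | exact hfirst i hi | exact (hfirst i hi).symm
    | exact hpath i j hij | exact (hpath i j hij).symm
    | exact hlast i hi | exact (hlast i hi).symm

section Extension

variable {n : ℕ} {α : Type*} {L : FFVert n → Finset α} {cx cy cz c : α}

theorem ExtendsFF.of_rev (h : ExtendsFF (L ∘ rev) cz cy cx) : ExtendsFF L cx cy cz := by
  obtain ⟨ψ, hψ, hx, hy, hz, hL⟩ := h
  refine ⟨ψ ∘ rev, fun u w huw => hψ _ _ (fatFan_adj_rev huw), hz, hy, hx, fun w h₁ h₂ h₃ => ?_⟩
  simpa using hL w.rev (by cases w <;> simp_all [rev]) (by cases w <;> simp_all [rev])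
    (by cases w <;> simp_all [rev])

variable [DecidableEq α]

theorem ExtendsFF.of_card_sdiff_last (hlist : ∀ i, 3 ≤ #(L (v i))) (hxy : cx ≠ cy) (hyz : cy ≠ cz)
    (hc : c ∈ L apex) (hcx : c ≠ cx) (hcy : c ≠ cy) (hcz : c ≠ cz)
    (i₁ : Fin n) (hi₁ : (i₁ : ℕ) + 1 = n) (h : 1 < #(L (v i₁) \ {cz, c})) :
    ExtendsFF L cx cy cz := by
  let ℓ : Fin n → Finset α := fun i => if i = i₁ then L (v i) \ {cz, c} else (L (v i)).erase c
  obtain ⟨g, hg0, hg⟩ := exists_path_listColoring cx ℓ fun i => by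
    by_cases hi : i = i₁
    · simpa [ℓ, hi] using h
    · have := pred_card_le_card_erase (s := L (v i)) (a := c)
      simp only [ℓ, hi, if_false]
      have := hlist i
      omega
  have hmem : ∀ i, g (i + 1) ∈ L (v i) ∧ g (i + 1) ≠ c ∧ (i = i₁ → g (i + 1) ≠ cz) := by
    intro i
    have := (hg i).1
    by_cases hi : i = i₁ <;> simp_all [ℓ]
  refine ⟨elim cx cy cz c fun i => g (i + 1),
    fun u w => ne_of_fatFan_adj _ hxy hyz hcx.symm hcy.symm hcz.symm (fun i => (hmem i).2.1.symm)
      ?_ ?_ ?_, rfl, rfl, rfl, ?_⟩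
  · intro i hi
    simpa [hi, hg0] using (hg i).2
  · rintro i j hij
    simpa [← hij] using (hg j).2
  · intro i hi
    exact (hmem i).2.2 (Fin.ext (by omega))
  · rintro (_ | _ | _ | _ | i) h₁ h₂ h₃ <;> simp_all

theorem ExtendsFF.of_card_sdiff_first (hlist : ∀ i, 3 ≤ #(L (v i))) (hxy : cx ≠ cy)
    (hyz : cy ≠ cz) (hc : c ∈ L apex) (hcx : c ≠ cx) (hcy : c ≠ cy) (hcz : c ≠ cz)
    (i₀ : Fin n) (hi₀ : (i₀ : ℕ) = 0) (h : 1 < #(L (v i₀) \ {cx, c})) :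
    ExtendsFF L cx cy cz :=
  .of_rev <| .of_card_sdiff_last (fun i => hlist i.rev) hyz.symm hxy.symm hc hcz hcy hcx i₀.rev
    (by simp only [Fin.val_rev]; omega) (by simpa [rev] using h)

end Extension

section Lists

variable {α : Type*} [DecidableEq α] {A : Finset α} {a b s t : α}

theorem pair_subset_of_card_sdiff_le_one (hA : 3 ≤ #A) (h : #(A \ {a, b}) ≤ 1) :
    {a, b} ⊆ A := by
  have := card_sdiff_add_card_inter A {a, b}
  have := card_le_two (a := a) (b := b)
  rw [← inter_eq_right]
  exact eq_of_subset_of_card_le inter_subset_right (by omega)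

theorem eq_triple_of_card_sdiff_le_one (hA : 3 ≤ #A) (hs : #(A \ {a, s}) ≤ 1)
    (ht : #(A \ {a, t}) ≤ 1) (has : a ≠ s) (hat : a ≠ t) (hst : s ≠ t) : A = {a, s, t} := by
  have hsA := pair_subset_of_card_sdiff_le_one hA hs
  have htA := pair_subset_of_card_sdiff_le_one hA ht
  refine (eq_of_subset_of_card_le ?_ ?_).symm
  · simp_all [insert_subset_iff]
  · have := card_le_card_sdiff_add_card (s := A) (t := {a, s})
    have := card_le_two (a := a) (b := s)
    rw [card_eq_three.2 ⟨a, s, t, has, hat, hst, rfl⟩]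
    omega

theorem mem_and_notMem_of_subset_insert {B : Finset α} (h : A ⊆ insert b B) (hB : #B < #A) :
    b ∈ A ∧ b ∉ B := by
  by_contra hb
  have : A ⊆ B := fun c hc => by
    rcases mem_insert.1 (h hc) with rfl | hcB
    · exact (not_and_or.1 hb).elim (absurd hc) not_not.1
    · exact hcB
  exact (card_le_card this).not_gt hB

end Lists

theorem card_sdiff_le_one_of_not_extendsFF {n : ℕ} {α : Type*} [DecidableEq α]
    {L : FFVert n → Finset α} (hlist : ∀ i, 3 ≤ #(L (v i))) {cx cy cz c : α} (hxy : cx ≠ cy)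
    (hyz : cy ≠ cz) (hext : ¬ ExtendsFF L cx cy cz) (hc : c ∈ L apex \ {cx, cy, cz})
    (i₀ i₁ : Fin n) (hi₀ : (i₀ : ℕ) = 0) (hi₁ : (i₁ : ℕ) + 1 = n) :
    #(L (v i₀) \ {cx, c}) ≤ 1 ∧ #(L (v i₁) \ {cz, c}) ≤ 1 := by
  simp only [mem_sdiff, mem_insert, mem_singleton, not_or] at hc
  obtain ⟨hc, hcx, hcy, hcz⟩ := hc
  exact ⟨not_lt.1 fun h => hext (.of_card_sdiff_first hlist hxy hyz hc hcx hcy hcz i₀ hi₀ h),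
    not_lt.1 fun h => hext (.of_card_sdiff_last hlist hxy hyz hc hcx hcy hcz i₁ hi₁ h)⟩

theorem lists_eq_of_not_extendsFF {n : ℕ} {α : Type*} [DecidableEq α]
    {L : FFVert n → Finset α} (hapex : #(L apex) = 5) (hlist : ∀ i, 3 ≤ #(L (v i)))
    {cx cy cz : α} (hxy : cx ≠ cy) (hyz : cy ≠ cz) (hext : ¬ ExtendsFF L cx cy cz)
    (i₀ i₁ : Fin n) (hi₀ : (i₀ : ℕ) = 0) (hi₁ : (i₁ : ℕ) + 1 = n) :
    {cx} = L (v i₀) \ L (v i₁) ∧ {cz} = L (v i₁) \ L (v i₀) ∧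
      {cy} = L apex \ (L (v i₀) ∪ L (v i₁)) := by
  have hends c (hc : c ∈ L apex \ {cx, cy, cz}) :=
    card_sdiff_le_one_of_not_extendsFF hlist hxy hyz hext hc i₀ i₁ hi₀ hi₁
  obtain ⟨s, hs, t, ht, hst⟩ := one_lt_card.1 <| by
    have := le_card_sdiff {cx, cy, cz} (L apex)
    have := card_le_three (a := cx) (b := cy) (c := cz)
    change 1 < #(L apex \ {cx, cy, cz})
    omega
  obtain ⟨-, hsx, hsy, hsz⟩ : s ∈ L apex ∧ s ≠ cx ∧ s ≠ cy ∧ s ≠ cz := by simpa using hs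
  obtain ⟨-, htx, hty, htz⟩ : t ∈ L apex ∧ t ≠ cx ∧ t ≠ cy ∧ t ≠ cz := by simpa using ht
  have hL₀ : L (v i₀) = {cx, s, t} :=
    eq_triple_of_card_sdiff_le_one (hlist i₀) (hends s hs).1 (hends t ht).1 hsx.symm htx.symm hst
  have hL₁ : L (v i₁) = {cz, s, t} :=
    eq_triple_of_card_sdiff_le_one (hlist i₁) (hends s hs).2 (hends t ht).2 hsz.symm htz.symm hst
  have hfree_mem : ∀ c ∈ L apex \ {cx, cy, cz}, c = s ∨ c = t := fun c hc => by
    have := pair_subset_of_card_sdiff_le_one (hlist i₀) (hends c hc).1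
    simp_all [insert_subset_iff]
  have hapex_mem : ∀ c ∈ L apex, c = cz ∨ c = cy ∨ c = cx ∨ c = s ∨ c = t := fun c hc => by
    have := hfree_mem c
    simp only [mem_sdiff, mem_insert, mem_singleton] at this
    tauto
  have hcard : ∀ {B : Finset α}, #B ≤ 4 → #B < #(L apex) := by omega
  have hxz : cx ≠ cz := fun h => (mem_and_notMem_of_subset_insert (B := {cy, cx, s, t})
    (fun c hc => by simpa using hapex_mem c hc) (hcard card_le_four)).2 (by simp [h])
  have hy : cy ∈ L apex := (mem_and_notMem_of_subset_insert (B := {cz, cx, s, t})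
    (fun c hc => by simp only [mem_insert, mem_singleton]; grind) (hcard card_le_four)).1
  rw [hL₀, hL₁]
  refine ⟨?_, ?_, ?_⟩ <;> ext c <;> simp only [mem_singleton, mem_sdiff, mem_union, mem_insert]
  · grind
  · grind
  · have := hapex_mem c
    grind

/-- If a precoloring of the base of a fat fan does not extend, then the colors
of `x`, `z` and `y` are uniquely determined by the lists; in particular there
is at most one non-extendable precoloring. -/
theorem fatFan_nonextendable_unique {n : ℕ} {α : Type*} [DecidableEq α]
    (hn : 1 ≤ n) (L : FFVert n → Finset α)
    (hapex : (L FFVert.apex).card = 5)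
    (hlist : ∀ i : Fin n, 3 ≤ (L (FFVert.v i)).card ∧ (L (FFVert.v i)).card ≤ 5)
    (cx cy cz : α) (hxy : cx ≠ cy) (hyz : cy ≠ cz)
    (hext : ¬ ExtendsFF L cx cy cz) :
    ({cx} : Finset α) = L (FFVert.v ⟨0, by omega⟩) \ L (FFVert.v ⟨n - 1, by omega⟩) ∧
    ({cz} : Finset α) = L (FFVert.v ⟨n - 1, by omega⟩) \ L (FFVert.v ⟨0, by omega⟩) ∧
    ({cy} : Finset α) = L FFVert.apex \
      (L (FFVert.v ⟨0, by omega⟩) ∪ L (FFVert.v ⟨n - 1, by omega⟩)) ∧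
    (∀ cx' cy' cz' : α, cx' ≠ cy' → cy' ≠ cz' → ¬ ExtendsFF L cx' cy' cz' →
      cx' = cx ∧ cy' = cy ∧ cz' = cz) := by
  have lists {cx cy cz : α} (hxy : cx ≠ cy) (hyz : cy ≠ cz) (hext : ¬ ExtendsFF L cx cy cz) :=
    lists_eq_of_not_extendsFF hapex (fun i => (hlist i).1) hxy hyz hext
      ⟨0, by omega⟩ ⟨n - 1, by omega⟩ rfl (Nat.sub_add_cancel hn)
  obtain ⟨hx, hz, hy⟩ := lists hxy hyz hext
  refine ⟨hx, hz, hy, fun cx' cy' cz' hxy' hyz' hext' => ?_⟩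
  obtain ⟨hx', hz', hy'⟩ := lists hxy' hyz' hext'
  exact ⟨singleton_inj.1 (hx'.trans hx.symm), singleton_inj.1 (hy'.trans hy.symm),
    singleton_inj.1 (hz'.trans hz.symm)⟩
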